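/- Let G = V ⋊_ψ D with V = Z_p^d, p ∤ |D|, and ψ irreducible non-trivial. Set A = Aut(G). Then A = Inn_G(V) ⋊ N_A(D), where Inn_G(V) (the group of inner automorphisms induced by elements of V) is isomorphic to V and is normal in A. -/

import Mathlib

open Pointwise

/-- The canonical homomorphism `AddAut V →* MulAut (Multiplicative V)`. -/
def addAutToMulAut {V : Type*} [AddGroup V] :
    Multiplicative (AddAut V) →* MulAut (Multiplicative V) :=
  MonoidHom.mk' (fun e => AddEquiv.toMultiplicative e.toAdd) (fun e₁ e₂ => by ext x; rfl)

/-!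
`V` is characteristic in `G = V ⋊ D`: as `p ∤ |D|`, it is the set of `x ∈ G` with `x ^ p = 1`.
Hence `Inn_G(V)` is normal in `A`, and for `f ∈ A` the subgroup `f(D)` is the image of a
splitting `d ↦ w(d) d` of `G → D`, with `w` a `1`-cocycle. Since `|D|` is invertible on `V`,
averaging `w` over `D` writes it as a coboundary `w(d) = v ψ(d)(v)⁻¹`, i.e. `f(D) = v D v⁻¹`,
so `f ∈ Inn_G(V) N_A(D)`. Conjugation by `v ∈ V` normalises `D` only if `v` is fixed by `ψ(D)`;
the fixed points form a `ψ`-invariant subgroup, hence are trivial, which gives both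
`Inn_G(V) ∩ N_A(D) = 1` and `Inn_G(V) ≅ V`.
-/

theorem MulAut.mul_conj_mul_inv {G : Type*} [Group G] (f : MulAut G) (g : G) :
    f * MulAut.conj g * f⁻¹ = MulAut.conj (f g) := by
  ext x
  simp [MulAut.inv_def]

theorem MonoidHom.normal_range_conj_comp {H G : Type*} [Group H] [Group G] (i : H →* G)
    (hi : ∀ (f : MulAut G) (h : H), f (i h) ∈ i.range) :
    (MulAut.conj.comp i).range.Normal := by
  refine ⟨?_⟩
  rintro _ ⟨h, rfl⟩ f
  obtain ⟨h', hh'⟩ := hi f h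
  exact ⟨h', by simp [hh', MulAut.mul_conj_mul_inv]⟩

theorem eq_one_of_pow_eq_one_of_coprime {D : Type*} [Group D] {p : ℕ}
    (hcop : (Nat.card D).Coprime p) {d : D} (hd : d ^ p = 1) : d = 1 :=
  orderOf_eq_one_iff.mp <|
    Nat.eq_one_of_dvd_coprimes hcop (orderOf_dvd_natCard d) (orderOf_dvd_of_pow_eq_one hd)

theorem eq_zero_of_forall_apply_eq_self {V D : Type*} [AddGroup V] [Group D]
    (ψ : D →* Multiplicative (AddAut V))
    (hirr : ∀ W : AddSubgroup V, (∀ g, ∀ v ∈ W, (ψ g).toAdd v ∈ W) → W = ⊥ ∨ W = ⊤)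
    (hnt : ∃ g v, (ψ g).toAdd v ≠ v) {v : V} (hv : ∀ d, (ψ d).toAdd v = v) : v = 0 := by
  let W : AddSubgroup V :=
    { carrier := {x | ∀ d, (ψ d).toAdd x = x}
      zero_mem' := fun d => map_zero _
      add_mem' := fun ha hb d => by simp only [map_add, ha d, hb d]
      neg_mem' := fun ha d => by simp only [map_neg, ha d] }
  rcases hirr W fun g x hx => (hx g).symm ▸ hx with hbot | htop
  · exact (AddSubgroup.mem_bot).mp (hbot ▸ hv : v ∈ (⊥ : AddSubgroup V))
  · obtain ⟨g, x, hx⟩ := hnt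
    exact absurd ((htop ▸ AddSubgroup.mem_top x : x ∈ W) g) hx

theorem exists_eq_mul_inv_of_cocycle {N D : Type*} [CommGroup N] [Group D] [Finite D]
    (φ : D →* MulAut N) {p : ℕ} (hN : ∀ n : N, n ^ p = 1) (hcop : (Nat.card D).Coprime p)
    (w : D → N) (hw : ∀ d₁ d₂, w (d₁ * d₂) = w d₁ * φ d₁ (w d₂)) :
    ∃ n, ∀ d, w d = n * (φ d n)⁻¹ := by
  have := Fintype.ofFinite D
  have hσ : ∀ d, w d ^ Nat.card D = (∏ x, w x) * (φ d (∏ x, w x))⁻¹ := by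
    intro d
    refine eq_mul_inv_of_mul_eq ?_
    calc w d ^ Nat.card D * φ d (∏ x, w x) = ∏ x, w (d * x) := by
          simp only [hw, Finset.prod_mul_distrib, Finset.prod_const, Finset.card_univ,
            Nat.card_eq_fintype_card, map_prod]
      _ = ∏ x, w x := Fintype.prod_equiv (Equiv.mulLeft d) _ _ fun _ => rfl
  obtain ⟨a, b, hab⟩ := Nat.isCoprime_iff_coprime.mpr hcop
  refine ⟨(∏ x, w x) ^ a, fun d => ?_⟩
  calc w d = w d ^ (a * Nat.card D + b * p : ℤ) := by rw [hab, zpow_one]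
    _ = (w d ^ Nat.card D) ^ a := by
      rw [zpow_add, mul_comm a, mul_comm b, zpow_mul, zpow_mul, zpow_natCast, zpow_natCast,
        hN, one_zpow, mul_one]
    _ = (∏ x, w x) ^ a * (φ d ((∏ x, w x) ^ a))⁻¹ := by rw [hσ, mul_zpow, inv_zpow, map_zpow]

namespace SemidirectProduct

section

variable {N D : Type*} [Group N] [Group D] {φ : D →* MulAut N}

theorem conj_inl_inr (n : N) (d : D) :
    MulAut.conj (inl n : N ⋊[φ] D) (inr d) = inl (n * (φ d n)⁻¹) * inr d := by
  ext <;> simp [MulAut.conj_apply]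

theorem apply_eq_of_conj_inl_inr_mem_range_inr {n : N} {d : D}
    (h : MulAut.conj (inl n : N ⋊[φ] D) (inr d) ∈ (inr : D →* N ⋊[φ] D).range) : φ d n = n := by
  obtain ⟨d', hd'⟩ := h
  have := congrArg left (hd'.trans (conj_inl_inr n d))
  simp only [left_inr, mul_left, left_inl, right_inl, map_one, mul_one] at this
  exact (mul_inv_eq_one.mp this.symm).symm

theorem eq_one_of_conj_inl_mem_stabilizer (hfix : ∀ n : N, (∀ d, φ d n = n) → n = 1) {n : N}
    (h : MulAut.conj (inl n) ∈ MulAction.stabilizer (MulAut (N ⋊[φ] D))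
      ((inr : D →* N ⋊[φ] D).range)) : n = 1 := by
  refine hfix n fun d => apply_eq_of_conj_inl_inr_mem_range_inr ?_
  have := Subgroup.smul_mem_pointwise_smul (inr d) (MulAut.conj (inl n : N ⋊[φ] D))
    (inr : D →* N ⋊[φ] D).range ⟨d, rfl⟩
  rwa [MulAction.mem_stabilizer_iff.mp h] at this

theorem injective_conj_comp_inl (hfix : ∀ n : N, (∀ d, φ d n = n) → n = 1) :
    Function.Injective (MulAut.conj.comp (inl : N →* N ⋊[φ] D)) :=
  (injective_iff_map_eq_one _).mpr fun n hn => eq_one_of_conj_inl_mem_stabilizer hfix <| by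
    rw [← MonoidHom.comp_apply, hn]
    exact one_mem _

theorem range_conj_inl_inf_stabilizer_eq_bot (hfix : ∀ n : N, (∀ d, φ d n = n) → n = 1) :
    (MulAut.conj.comp (inl : N →* N ⋊[φ] D)).range ⊓
      MulAction.stabilizer (MulAut (N ⋊[φ] D)) ((inr : D →* N ⋊[φ] D).range) = ⊥ := by
  rw [eq_bot_iff]
  rintro _ ⟨⟨n, rfl⟩, hn⟩
  rw [eq_one_of_conj_inl_mem_stabilizer hfix hn, map_one]
  exact one_mem _

variable {p : ℕ}

theorem mem_range_inl_of_pow_eq_one (hcop : (Nat.card D).Coprime p) {x : N ⋊[φ] D}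
    (hx : x ^ p = 1) : x ∈ (inl : N →* N ⋊[φ] D).range := by
  rw [range_inl_eq_ker_rightHom]
  exact eq_one_of_pow_eq_one_of_coprime hcop (by rw [← map_pow, hx, map_one])

theorem map_inl_mem_range_inl (hN : ∀ n : N, n ^ p = 1) (hcop : (Nat.card D).Coprime p)
    (f : MulAut (N ⋊[φ] D)) (n : N) : f (inl n) ∈ (inl : N →* N ⋊[φ] D).range :=
  mem_range_inl_of_pow_eq_one hcop (by rw [← map_pow, ← map_pow, hN, map_one, map_one])

end

section

variable {N D : Type*} [CommGroup N] [Group D] [Finite D] {φ : D →* MulAut N} {p : ℕ}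

theorem exists_conj_inl_eq_of_right_eq
    (hN : ∀ n : N, n ^ p = 1) (hcop : (Nat.card D).Coprime p) (s : D →* N ⋊[φ] D)
    (hs : ∀ d, (s d).right = d) : ∃ n, ∀ d, MulAut.conj (inl n) (inr d) = s d := by
  obtain ⟨n, hn⟩ := exists_eq_mul_inv_of_cocycle φ hN hcop (fun d => (s d).left)
    fun d₁ d₂ => by rw [map_mul, mul_left, hs]
  refine ⟨n, fun d => ?_⟩
  conv_rhs => rw [← inl_left_mul_inr_right (s d), hs, hn]
  exact conj_inl_inr n d

theorem exists_conj_inl_inv_mul_mem_stabilizer (hN : ∀ n : N, n ^ p = 1) (hcop : (Nat.card D).Coprime p)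
    (f : MulAut (N ⋊[φ] D)) : ∃ n, (MulAut.conj (inl n))⁻¹ * f ∈
      MulAction.stabilizer (MulAut (N ⋊[φ] D)) ((inr : D →* N ⋊[φ] D).range) := by
  let r : D →* D := rightHom.comp (f.toMonoidHom.comp inr)
  have hr : Function.Injective r := by
    refine (injective_iff_map_eq_one r).mpr fun d hd => eq_one_of_pow_eq_one_of_coprime hcop ?_
    obtain ⟨m, hm⟩ : f (inr d) ∈ (inl : N →* N ⋊[φ] D).range := by
      rw [range_inl_eq_ker_rightHom]
      exact hd
    apply inr_injective (φ := φ)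
    apply f.injective
    rw [map_pow, map_pow, ← hm, ← map_pow, hN, map_one, map_one, map_one]
  let e := MulEquiv.ofBijective r (Finite.injective_iff_bijective.mp hr)
  obtain ⟨n, hn⟩ := exists_conj_inl_eq_of_right_eq hN hcop
    ((f.toMonoidHom.comp inr).comp e.symm.toMonoidHom) (e.apply_symm_apply)
  refine ⟨n, ?_⟩
  rw [MulAction.mem_stabilizer_iff, mul_smul, inv_smul_eq_iff]
  ext x
  simp only [Subgroup.mem_smul_pointwise_iff_exists, MonoidHom.mem_range, exists_exists_eq_and,
    MulAut.smul_def, hn]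
  exact e.symm.surjective.exists

theorem range_conj_inl_sup_stabilizer_eq_top (hN : ∀ n : N, n ^ p = 1)
    (hcop : (Nat.card D).Coprime p) :
    (MulAut.conj.comp (inl : N →* N ⋊[φ] D)).range ⊔
      MulAction.stabilizer (MulAut (N ⋊[φ] D)) ((inr : D →* N ⋊[φ] D).range) = ⊤ := by
  refine eq_top_iff.mpr fun f _ => ?_
  obtain ⟨n, hn⟩ := exists_conj_inl_inv_mul_mem_stabilizer hN hcop f
  have hinn : MulAut.conj (inl n) ∈ (MulAut.conj.comp (inl : N →* N ⋊[φ] D)).range := ⟨n, rfl⟩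
  simpa using Subgroup.mul_mem_sup hinn hn

end

end SemidirectProduct

open SemidirectProduct in
theorem stmt_9_general (p : ℕ) [Fact p.Prime]
    (V : Type) [AddCommGroup V] (hV : ∀ v : V, p • v = 0)
    (D : Type) [Group D] [Finite D] (hpD : ¬ p ∣ Nat.card D)
    (ψ : D →* Multiplicative (AddAut V))
    (hirr : ∀ W : AddSubgroup V, (∀ g, ∀ v ∈ W, (ψ g).toAdd v ∈ W) → W = ⊥ ∨ W = ⊤)
    (hnt : ∃ g v, (ψ g).toAdd v ≠ v) :
    ∀ (InnV NA : Subgroup (MulAut (Multiplicative V ⋊[addAutToMulAut.comp ψ] D))),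
      InnV = (MulAut.conj.comp SemidirectProduct.inl).range →
      NA = MulAction.stabilizer (MulAut (Multiplicative V ⋊[addAutToMulAut.comp ψ] D))
        (SemidirectProduct.inr.range :
          Subgroup (Multiplicative V ⋊[addAutToMulAut.comp ψ] D)) →
      InnV.Normal ∧ InnV ⊓ NA = ⊥ ∧ InnV ⊔ NA = ⊤ ∧
        Nonempty (InnV ≃* Multiplicative V) := by
  rintro _ _ rfl rfl
  have hcop : (Nat.card D).Coprime p := ((Nat.Prime.coprime_iff_not_dvd Fact.out).mpr hpD).symm
  have hN : ∀ n : Multiplicative V, n ^ p = 1 := fun n => hV n.toAdd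
  have hfix : ∀ n : Multiplicative V, (∀ d, addAutToMulAut.comp ψ d n = n) → n = 1 := fun n hn =>
    eq_zero_of_forall_apply_eq_self ψ hirr hnt fun d => congrArg Multiplicative.toAdd (hn d)
  exact ⟨MonoidHom.normal_range_conj_comp _ (map_inl_mem_range_inl hN hcop),
    range_conj_inl_inf_stabilizer_eq_bot hfix, range_conj_inl_sup_stabilizer_eq_top hN hcop,
    ⟨(MonoidHom.ofInjective (injective_conj_comp_inl hfix)).symm⟩⟩

/-- Let `G = V ⋊_ψ D` with `V = Z_p^d`, `p ∤ |D|`, `ψ` irreducible non-trivial, and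
`A = Aut(G)`. Then `A = Inn_G(V) ⋊ N_A(D)`, where `Inn_G(V)` is normal in `A` and
isomorphic to `V`. -/
theorem stmt_9 (p : ℕ) [Fact p.Prime]
    (V : Type) [AddCommGroup V] [Finite V] (hV : ∀ v : V, p • v = 0)
    (D : Type) [Group D] [Finite D] (hpD : ¬ p ∣ Nat.card D)
    (ψ : D →* Multiplicative (AddAut V))
    (hirr : ∀ W : AddSubgroup V, (∀ g, ∀ v ∈ W, (ψ g).toAdd v ∈ W) → W = ⊥ ∨ W = ⊤)
    (hnt : ∃ g v, (ψ g).toAdd v ≠ v) :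
    ∀ (InnV NA : Subgroup (MulAut (Multiplicative V ⋊[addAutToMulAut.comp ψ] D))),
      InnV = (MulAut.conj.comp SemidirectProduct.inl).range →
      NA = MulAction.stabilizer (MulAut (Multiplicative V ⋊[addAutToMulAut.comp ψ] D))
        (SemidirectProduct.inr.range :
          Subgroup (Multiplicative V ⋊[addAutToMulAut.comp ψ] D)) →
      InnV.Normal ∧ InnV ⊓ NA = ⊥ ∧ InnV ⊔ NA = ⊤ ∧
        Nonempty (InnV ≃* Multiplicative V) :=
  stmt_9_general p V hV D hpD ψ hirr hnt
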